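/- arXiv:1710.04521 — 2 statements merged into one kernel-verified Lean document; each statement's English description precedes it below -/
import Mathlib

section
/- Let c_i, i = 1..n, be independent chi-squared random variables with 1 degree of freedom and let a_i > 0. Define g = Σ a_i c_i. Set α = (Σ a_i³)/(Σ a_i²), β = Σ a_i − (Σ a_i²)²/(Σ a_i³), and m = (Σ a_i²)³/(Σ a_i³)². Then the affine transform α·c_m + β of a chi-squared variable c_m with m degrees of freedom matches g in mean, variance, and third central moment. -/
/-!
Mean, variance and third central moment are the first three cumulants: they are additive over
independent summands (for the third central moment, the mixed terms `E[X²Y]`, `E[XY²]` of centred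
independent `X, Y` factor and vanish) and scale by `c`, `c²`, `c³` under `x ↦ c x + b`.
Since `χ²_k` has cumulants `k, 2k, 8k`, the variable `g` has cumulants `Σ aᵢ, 2 Σ aᵢ², 8 Σ aᵢ³`
and `α c_m + β` has `α m + β, 2 α² m, 8 α³ m`, which agree for the given `α, β, m`.
The `χ²` moments come from the Gamma density: `x ^ k` times the `Gamma(a, r)` density is
`Γ(a + k) / (Γ(a) r ^ k)` times the `Gamma(a + k, r)` density.
-/

open MeasureTheory ProbabilityTheory Finset

/-- The chi-squared distribution with `k` degrees of freedom (possibly non-integer), as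
`Gamma(k/2, rate 1/2)`. -/
noncomputable def chiSqMeasure (k : ℝ) : Measure ℝ :=
  gammaMeasure (k / 2) (1 / 2)

open Real

namespace ProbabilityTheory

section Gamma

variable {a r : ℝ}

lemma gammaPDF_toReal (ha : 0 < a) (hr : 0 < r) (x : ℝ) :
    (gammaPDF a r x).toReal = gammaPDFReal a r x :=
  ENNReal.toReal_ofReal (gammaPDFReal_nonneg ha hr x)

lemma measurable_gammaPDF (a r : ℝ) : Measurable (gammaPDF a r) :=
  (measurable_gammaPDFReal a r).ennreal_ofReal

lemma integral_gammaMeasure (ha : 0 < a) (hr : 0 < r) (f : ℝ → ℝ) :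
    ∫ x, f x ∂gammaMeasure a r = ∫ x, gammaPDFReal a r x * f x := by
  rw [gammaMeasure, integral_withDensity_eq_integral_toReal_smul
    (measurable_gammaPDF a r) (ae_of_all _ fun _ => ENNReal.ofReal_lt_top)]
  simp only [gammaPDF_toReal ha hr, smul_eq_mul]

lemma integrable_gammaMeasure_iff (ha : 0 < a) (hr : 0 < r) {f : ℝ → ℝ} :
    Integrable f (gammaMeasure a r) ↔ Integrable fun x => gammaPDFReal a r x * f x := by
  rw [gammaMeasure, integrable_withDensity_iff_integrable_smul'
    (measurable_gammaPDF a r) (ae_of_all _ fun _ => ENNReal.ofReal_lt_top)]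
  simp only [gammaPDF_toReal ha hr, smul_eq_mul]

lemma integrable_gammaPDFReal (ha : 0 < a) (hr : 0 < r) : Integrable (gammaPDFReal a r) := by
  have := isProbabilityMeasure_gammaMeasure ha hr
  simpa using (integrable_gammaMeasure_iff ha hr).1 (integrable_const (1 : ℝ))

lemma integral_gammaPDFReal (ha : 0 < a) (hr : 0 < r) : ∫ x, gammaPDFReal a r x = 1 := by
  have := isProbabilityMeasure_gammaMeasure ha hr
  simpa using (integral_gammaMeasure ha hr fun _ => 1).symm

lemma gammaPDFReal_mul_pow (ha : 0 < a) (hr : 0 < r) (k : ℕ) (x : ℝ) :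
    gammaPDFReal a r x * x ^ k
      = Gamma (a + k) / (Gamma a * r ^ k) * gammaPDFReal (a + k) r x := by
  rcases Nat.eq_zero_or_pos k with rfl | hk
  · simp [div_self (Gamma_pos_of_pos ha).ne']
  have hk' : (1 : ℝ) ≤ k := by exact_mod_cast hk
  have hG : Gamma (a + k) ≠ 0 := (Gamma_pos_of_pos (by linarith)).ne'
  have hGa : Gamma a ≠ 0 := (Gamma_pos_of_pos ha).ne'
  unfold gammaPDFReal
  split_ifs with hx
  · rw [show a + k - 1 = (a - 1) + k by ring, rpow_add_natCast' hx (by linarith),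
      rpow_add_natCast' hr.le (by linarith)]
    field_simp
  · simp

lemma integrable_pow_gammaMeasure (ha : 0 < a) (hr : 0 < r) (k : ℕ) :
    Integrable (fun x => x ^ k) (gammaMeasure a r) := by
  rw [integrable_gammaMeasure_iff ha hr]
  simp_rw [gammaPDFReal_mul_pow ha hr]
  exact (integrable_gammaPDFReal (by positivity) hr).const_mul _

lemma integral_pow_gammaMeasure (ha : 0 < a) (hr : 0 < r) (k : ℕ) :
    ∫ x, x ^ k ∂gammaMeasure a r = Gamma (a + k) / (Gamma a * r ^ k) := by
  simp_rw [integral_gammaMeasure ha hr, gammaPDFReal_mul_pow ha hr, integral_const_mul,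
    integral_gammaPDFReal (by positivity : 0 < a + k) hr, mul_one]

lemma ae_nonneg_gammaMeasure : ∀ᵐ x ∂gammaMeasure a r, 0 ≤ x := by
  rw [ae_iff]
  simp only [not_le]
  change gammaMeasure a r (Set.Iio 0) = 0
  rw [gammaMeasure, withDensity_apply _ measurableSet_Iio, lintegral_gammaPDF_of_nonpos le_rfl]

lemma memLp_id_gammaMeasure (ha : 0 < a) (hr : 0 < r) (k : ℕ) :
    MemLp id k (gammaMeasure a r) := by
  rcases eq_or_ne k 0 with rfl | hk
  · simpa using memLp_zero_iff_aestronglyMeasurable.2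
      (measurable_id.aestronglyMeasurable (μ := gammaMeasure a r))
  refine (integrable_norm_rpow_iff measurable_id.aestronglyMeasurable (by simpa using hk)
    (by simp)).1 ?_
  refine (integrable_pow_gammaMeasure ha hr k).congr (ae_nonneg_gammaMeasure.mono fun x hx => ?_)
  simp [abs_of_nonneg hx]

lemma moment_id_succ_gammaMeasure (ha : 0 < a) (hr : 0 < r) (k : ℕ) :
    moment id (k + 1) (gammaMeasure a r) = (a + k) / r * moment id k (gammaMeasure a r) := by
  simp only [moment, Pi.pow_apply, id]
  rw [integral_pow_gammaMeasure ha hr, integral_pow_gammaMeasure ha hr, Nat.cast_succ,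
    ← add_assoc, Gamma_add_one (by positivity), pow_succ]
  have := (Gamma_pos_of_pos ha).ne'
  field_simp

end Gamma

section CentralMoment

variable {Ω : Type*} {mΩ : MeasurableSpace Ω} {μ : Measure Ω} {X Y : Ω → ℝ}

lemma _root_.MeasureTheory.MemLp.integrable_pow_of_le [IsFiniteMeasure μ] {p k : ℕ}
    (hX : MemLp X p μ) (hk : k ≤ p) : Integrable (fun ω => X ω ^ k) μ := by
  have hXk : MemLp X k μ := hX.mono_exponent (by exact_mod_cast hk)
  refine (integrable_norm_iff (hXk.aestronglyMeasurable.pow k)).1 ?_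
  simpa only [Pi.pow_apply, norm_pow] using hXk.integrable_norm_pow'

lemma centralMoment_three_eq_moment [IsProbabilityMeasure μ] (hX : MemLp X 3 μ) :
    centralMoment X 3 μ = moment X 3 μ - 3 * μ[X] * moment X 2 μ + 2 * μ[X] ^ 3 := by
  have h1 : Integrable X μ := hX.integrable (by norm_num)
  have h2 := hX.integrable_pow_of_le (k := 2) (by norm_num)
  have h3 := hX.integrable_pow_of_le (k := 3) (by norm_num)
  simp only [centralMoment, moment, Pi.pow_apply, Pi.sub_apply]
  set c := μ[X]
  have expand : ∀ ω, (X ω - c) ^ 3 = X ω ^ 3 - 3 * c * X ω ^ 2 + 3 * c ^ 2 * X ω - c ^ 3 :=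
    fun ω => by ring
  simp only [expand]
  rw [integral_sub (by fun_prop) (by fun_prop), integral_add (by fun_prop) (by fun_prop),
    integral_sub h3 (by fun_prop), integral_const_mul, integral_const_mul, integral_const]
  simp only [smul_eq_mul, probReal_univ, one_mul]
  ring

lemma integral_const_mul_add [IsProbabilityMeasure μ] (hX : Integrable X μ) (c b : ℝ) :
    ∫ ω, c * X ω + b ∂μ = c * μ[X] + b := by
  rw [integral_add (hX.const_mul c) (integrable_const b), integral_const_mul, integral_const]
  simp

lemma centralMoment_const_mul_add [IsProbabilityMeasure μ] (hX : Integrable X μ) (c b : ℝ)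
    (p : ℕ) : centralMoment (fun ω => c * X ω + b) p μ = c ^ p * centralMoment X p μ := by
  simp only [centralMoment, Pi.pow_apply, Pi.sub_apply]
  rw [integral_const_mul_add hX, ← integral_const_mul (c ^ p)]
  refine integral_congr_ae (ae_of_all _ fun ω => ?_)
  simp only [← mul_pow, mul_sub, add_sub_add_right_eq_sub]

lemma centralMoment_id_map {Ω' : Type*} {mΩ' : MeasurableSpace Ω'} {ν : Measure Ω'} {f : Ω' → ℝ}
    (hf : AEMeasurable f ν) (p : ℕ) : centralMoment id p (ν.map f) = centralMoment f p ν := by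
  simp only [centralMoment, Pi.pow_apply, Pi.sub_apply, id]
  rw [integral_map hf (by fun_prop), integral_map hf (by fun_prop)]

lemma integral_id_map_const_mul_add {ν : Measure ℝ} [IsProbabilityMeasure ν]
    (hν : Integrable id ν) (c b : ℝ) :
    ∫ y, y ∂(ν.map fun x => c * x + b) = c * ∫ x, x ∂ν + b := by
  rw [integral_map (by fun_prop) (f := fun y => y) (by fun_prop)]
  exact integral_const_mul_add hν c b

lemma centralMoment_id_map_const_mul_add {ν : Measure ℝ} [IsProbabilityMeasure ν]
    (hν : Integrable id ν) (c b : ℝ) (p : ℕ) :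
    centralMoment id p (ν.map fun x => c * x + b) = c ^ p * centralMoment id p ν := by
  rw [centralMoment_id_map (by fun_prop)]
  exact centralMoment_const_mul_add hν c b p

lemma IndepFun.integral_add_pow_three_of_integral_eq_zero [IsProbabilityMeasure μ]
    (h : X ⟂ᵢ[μ] Y) (hX : MemLp X 3 μ) (hY : MemLp Y 3 μ) (hX0 : μ[X] = 0) (hY0 : μ[Y] = 0) :
    ∫ ω, (X ω + Y ω) ^ 3 ∂μ = ∫ ω, X ω ^ 3 ∂μ + ∫ ω, Y ω ^ 3 ∂μ := by
  have hX1 : Integrable X μ := hX.integrable (by norm_num)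
  have hY1 : Integrable Y μ := hY.integrable (by norm_num)
  have hX2 := hX.integrable_pow_of_le (k := 2) (by norm_num)
  have hY2 := hY.integrable_pow_of_le (k := 2) (by norm_num)
  have hX3 := hX.integrable_pow_of_le (k := 3) (by norm_num)
  have hY3 := hY.integrable_pow_of_le (k := 3) (by norm_num)
  have hXY : (fun ω => X ω ^ 2) ⟂ᵢ[μ] Y :=
    h.comp (φ := fun x => x ^ 2) (by fun_prop) measurable_id
  have hYX : (fun ω => Y ω ^ 2) ⟂ᵢ[μ] X :=
    h.symm.comp (φ := fun x => x ^ 2) (by fun_prop) measurable_id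
  have mixed₁ : ∫ ω, X ω ^ 2 * Y ω ∂μ = 0 := by
    rw [hXY.integral_fun_mul_eq_mul_integral hX2.aestronglyMeasurable hY1.aestronglyMeasurable,
      hY0, mul_zero]
  have mixed₂ : ∫ ω, Y ω ^ 2 * X ω ∂μ = 0 := by
    rw [hYX.integral_fun_mul_eq_mul_integral hY2.aestronglyMeasurable hX1.aestronglyMeasurable,
      hX0, mul_zero]
  have i₁ : Integrable (fun ω => 3 * (X ω ^ 2 * Y ω)) μ :=
    (hXY.integrable_mul hX2 hY1).const_mul 3
  have i₂ : Integrable (fun ω => 3 * (Y ω ^ 2 * X ω)) μ :=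
    (hYX.integrable_mul hY2 hX1).const_mul 3
  have expand : ∀ ω, (X ω + Y ω) ^ 3
      = X ω ^ 3 + Y ω ^ 3 + 3 * (X ω ^ 2 * Y ω) + 3 * (Y ω ^ 2 * X ω) := fun ω => by ring
  simp only [expand]
  rw [integral_add ((hX3.fun_add hY3).fun_add i₁) i₂, integral_add (hX3.fun_add hY3) i₁,
    integral_add hX3 hY3, integral_const_mul, integral_const_mul, mixed₁, mixed₂]
  simp

lemma IndepFun.centralMoment_three_add [IsProbabilityMeasure μ] (h : X ⟂ᵢ[μ] Y)
    (hX : MemLp X 3 μ) (hY : MemLp Y 3 μ) :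
    centralMoment (X + Y) 3 μ = centralMoment X 3 μ + centralMoment Y 3 μ := by
  have hX1 : Integrable X μ := hX.integrable (by norm_num)
  have hY1 : Integrable Y μ := hY.integrable (by norm_num)
  have hXc : MemLp (fun ω => X ω - μ[X]) 3 μ := hX.sub (memLp_const _)
  have hYc : MemLp (fun ω => Y ω - μ[Y]) 3 μ := hY.sub (memLp_const _)
  have hc : (fun ω => X ω - μ[X]) ⟂ᵢ[μ] (fun ω => Y ω - μ[Y]) :=
    h.comp (measurable_sub_const _) (measurable_sub_const _)
  have key := hc.integral_add_pow_three_of_integral_eq_zero hXc hYc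
    (by simp [integral_sub hX1 (integrable_const _)])
    (by simp [integral_sub hY1 (integrable_const _)])
  simp only [centralMoment, Pi.pow_apply, Pi.sub_apply, Pi.add_apply,
    integral_add hX1 hY1] at key ⊢
  rw [← key]
  exact integral_congr_ae (ae_of_all _ fun ω => by ring_nf)

lemma iIndepFun.centralMoment_three_sum [IsProbabilityMeasure μ] {ι : Type*} {X : ι → Ω → ℝ}
    (h : iIndepFun X μ) (hX : ∀ i, MemLp (X i) 3 μ) (s : Finset ι) :
    centralMoment (∑ i ∈ s, X i) 3 μ = ∑ i ∈ s, centralMoment (X i) 3 μ := by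
  classical
  induction s using Finset.induction_on with
  | empty => simp
  | insert j s hj ih =>
    rw [sum_insert hj, sum_insert hj, add_comm (X j), add_comm (centralMoment (X j) 3 μ), ← ih]
    exact (h.indepFun_finsetSum_of_notMem₀ (fun i => (hX i).aemeasurable) hj)
      |>.centralMoment_three_add (memLp_finsetSum' s fun i _ => hX i) (hX j)

lemma centralMoment_three_sum_pi {ι : Type*} [Fintype ι] {Ω : ι → Type*}
    {mΩ : ∀ i, MeasurableSpace (Ω i)} {μ : (i : ι) → Measure (Ω i)}
    [∀ i, IsProbabilityMeasure (μ i)] {X : Π i, Ω i → ℝ} (h : ∀ i, MemLp (X i) 3 (μ i)) :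
    centralMoment (∑ i, fun ω ↦ X i (ω i)) 3 (Measure.pi μ)
      = ∑ i, centralMoment (X i) 3 (μ i) := by
  rw [(iIndepFun_pi fun i ↦ (h i).aestronglyMeasurable.aemeasurable).centralMoment_three_sum
    (fun i ↦ (h i).comp_measurePreserving (measurePreserving_eval _ i))]
  refine sum_congr rfl fun i _ => ?_
  simp only [centralMoment, Pi.pow_apply, Pi.sub_apply]
  have hXi := (h i).aestronglyMeasurable
  rw [integral_comp_eval hXi,
    integral_comp_eval (f := fun t => (X i t - ∫ x, X i x ∂μ i) ^ 3) (by fun_prop)]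

end CentralMoment

section WeightedSum

variable {ι : Type*} [Fintype ι] {ν : Measure ℝ} [IsProbabilityMeasure ν] (a : ι → ℝ)

lemma integral_sum_mul_pi (hν : Integrable id ν) :
    ∫ x, ∑ i, a i * x i ∂Measure.pi (fun _ : ι => ν) = (∑ i, a i) * ∫ t, t ∂ν := by
  rw [integral_finsetSum _ fun i _ => ((integrable_eval hν).const_mul (a i)), sum_mul]
  simp_rw [integral_const_mul, integral_eval]

lemma variance_sum_mul_pi (hν : MemLp id 2 ν) :
    Var[fun x => ∑ i, a i * x i; Measure.pi fun _ : ι => ν] = (∑ i, a i ^ 2) * Var[id; ν] := by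
  rw [← sum_fn, variance_sum_pi (X := fun i t => a i * t) fun i => hν.const_mul (a i), sum_mul]
  exact sum_congr rfl fun i _ => variance_const_mul (a i) id ν

lemma centralMoment_three_sum_mul_pi (hν : MemLp id 3 ν) :
    centralMoment (fun x => ∑ i, a i * x i) 3 (Measure.pi fun _ : ι => ν)
      = (∑ i, a i ^ 3) * centralMoment id 3 ν := by
  rw [← sum_fn, centralMoment_three_sum_pi (X := fun i t => a i * t)
    fun i => hν.const_mul (a i), sum_mul]
  refine sum_congr rfl fun i _ => ?_
  simpa using centralMoment_const_mul_add (hν.integrable (by norm_num)) (a i) 0 3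

end WeightedSum

section ChiSq

variable {d : ℝ}

lemma isProbabilityMeasure_chiSqMeasure (hd : 0 < d) : IsProbabilityMeasure (chiSqMeasure d) :=
  isProbabilityMeasure_gammaMeasure (by positivity) one_half_pos

lemma memLp_id_chiSqMeasure (hd : 0 < d) (k : ℕ) : MemLp id k (chiSqMeasure d) :=
  memLp_id_gammaMeasure (by positivity) one_half_pos k

lemma moment_id_succ_chiSqMeasure (hd : 0 < d) (k : ℕ) :
    moment id (k + 1) (chiSqMeasure d) = (d + 2 * k) * moment id k (chiSqMeasure d) := by
  rw [chiSqMeasure, moment_id_succ_gammaMeasure (by positivity) one_half_pos]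
  ring

lemma integral_id_chiSqMeasure (hd : 0 < d) : ∫ x, x ∂chiSqMeasure d = d := by
  have := isProbabilityMeasure_chiSqMeasure hd
  simpa [moment] using moment_id_succ_chiSqMeasure hd 0

lemma moment_id_two_chiSqMeasure (hd : 0 < d) : moment id 2 (chiSqMeasure d) = d * (d + 2) := by
  rw [moment_id_succ_chiSqMeasure hd 1, moment_one]
  simp only [id, integral_id_chiSqMeasure hd]
  push_cast
  ring

lemma variance_id_chiSqMeasure (hd : 0 < d) : Var[id; chiSqMeasure d] = 2 * d := by
  have := isProbabilityMeasure_chiSqMeasure hd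
  rw [variance_eq_sub (memLp_id_chiSqMeasure hd 2), ← moment, moment_id_two_chiSqMeasure hd]
  simp only [id, integral_id_chiSqMeasure hd]
  ring

lemma centralMoment_id_three_chiSqMeasure (hd : 0 < d) :
    centralMoment id 3 (chiSqMeasure d) = 8 * d := by
  have := isProbabilityMeasure_chiSqMeasure hd
  rw [centralMoment_three_eq_moment (memLp_id_chiSqMeasure hd 3), moment_id_succ_chiSqMeasure hd 2,
    moment_id_two_chiSqMeasure hd]
  simp only [id, integral_id_chiSqMeasure hd]
  push_cast
  ring

end ChiSq

end ProbabilityTheory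

/-- Zhang's approximation: for independent `χ²₁` variables `c_i` and `a_i > 0`, with
`α = (Σ a_i³)/(Σ a_i²)`, `β = Σ a_i − (Σ a_i²)²/(Σ a_i³)` and `m = (Σ a_i²)³/(Σ a_i³)²`,
the affine transform `α·c_m + β` of a chi-squared variable with `m` degrees of freedom
matches `g = Σ a_i c_i` in mean, variance and third central moment. -/
theorem zhang_moment_matching {n : ℕ} (hn : 0 < n) (a : Fin n → ℝ) (ha : ∀ i, 0 < a i)
    (α β m : ℝ)
    (hα : α = (∑ i, (a i) ^ 3) / (∑ i, (a i) ^ 2))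
    (hβ : β = (∑ i, a i) - (∑ i, (a i) ^ 2) ^ 2 / (∑ i, (a i) ^ 3))
    (hm : m = (∑ i, (a i) ^ 2) ^ 3 / (∑ i, (a i) ^ 3) ^ 2)
    (μg μh : Measure ℝ)
    (hg : μg = Measure.map (fun x : Fin n → ℝ => ∑ i, a i * x i)
      (Measure.pi fun _ => chiSqMeasure 1))
    (hh : μh = Measure.map (fun x : ℝ => α * x + β) (chiSqMeasure m)) :
    (∫ x, x ∂μg) = (∫ x, x ∂μh) ∧
    (∫ x, (x - ∫ y, y ∂μg) ^ 2 ∂μg) = (∫ x, (x - ∫ y, y ∂μh) ^ 2 ∂μh) ∧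
    (∫ x, (x - ∫ y, y ∂μg) ^ 3 ∂μg) = (∫ x, (x - ∫ y, y ∂μh) ^ 3 ∂μh) := by
  have hne : (univ : Finset (Fin n)).Nonempty := univ_nonempty_iff.2 ⟨⟨0, hn⟩⟩
  have hS2 : 0 < ∑ i, a i ^ 2 := sum_pos (fun i _ => pow_pos (ha i) 2) hne
  have hS3 : 0 < ∑ i, a i ^ 3 := sum_pos (fun i _ => pow_pos (ha i) 3) hne
  have hm0 : 0 < m := hm ▸ by positivity
  have := isProbabilityMeasure_chiSqMeasure one_pos
  have := isProbabilityMeasure_chiSqMeasure hm0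
  have hχ₁ := memLp_id_chiSqMeasure one_pos 3
  have hχₘ : Integrable id (chiSqMeasure m) := (memLp_id_chiSqMeasure hm0 1).integrable (by norm_num)
  have hgm : AEMeasurable (fun x : Fin n → ℝ => ∑ i, a i * x i)
      (Measure.pi fun _ => chiSqMeasure 1) := Measurable.aemeasurable (by fun_prop)
  have hhm : AEMeasurable (fun x => α * x + β) (chiSqMeasure m) := by fun_prop
  subst hg hh
  refine ⟨?_, ?_, ?_⟩
  · rw [integral_map hgm (f := fun x => x) aestronglyMeasurable_id,
      integral_sum_mul_pi _ (hχ₁.integrable (by norm_num)), integral_id_map_const_mul_add hχₘ,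
      integral_id_chiSqMeasure one_pos, integral_id_chiSqMeasure hm0, hα, hβ, hm]
    field_simp
    ring
  · change centralMoment id 2 _ = centralMoment id 2 _
    rw [centralMoment_id_map hgm, centralMoment_id_map_const_mul_add hχₘ,
      centralMoment_two_eq_variance hgm, centralMoment_two_eq_variance aemeasurable_id,
      variance_sum_mul_pi _ (hχ₁.mono_exponent (by norm_num)), variance_id_chiSqMeasure one_pos,
      variance_id_chiSqMeasure hm0, hα, hm]
    field_simp
  · change centralMoment id 3 _ = centralMoment id 3 _
    rw [centralMoment_id_map hgm, centralMoment_id_map_const_mul_add hχₘ,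
      centralMoment_three_sum_mul_pi _ hχ₁, centralMoment_id_three_chiSqMeasure one_pos,
      centralMoment_id_three_chiSqMeasure hm0, hα, hm]
    field_simp
end

section
/- The function h(λ) = Σ_{i∈I} (w'Σ_i w)/(1 + λ w'Σ_i w) + Σ_{i∈I} (w'(ŷ − μ_i))² / (1 + λ w'Σ_i w)² is continuous and strictly decreasing on λ ∈ (−1/max_i(w'Σ_i w), ∞), tends to +∞ as λ approaches the left endpoint, and tends to 0 as λ → ∞; hence for any v > 0 there is a unique λ in this interval with h(λ) = |I|·v. -/
open Matrix Finset Set Filter Topology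

/-!
Writing `a_i = w'Σ_i w > 0` and `c_i = (w'(ŷ − μ_i))² ≥ 0`, every summand
`a_i / (1 + λ a_i) + c_i / (1 + λ a_i)²` is positive, continuous and strictly decreasing as long
as `1 + λ a_i > 0`, which holds for all `i` exactly when `λ > −1/max_i a_i`. At the left endpoint
the summand with the largest `a_i` blows up, and as `λ → ∞` every summand tends to `0`. The
intermediate value theorem and strict monotonicity then give exactly one solution of
`h(λ) = |I|·v`.
-/

theorem existsUnique_eq_of_strictAntiOn_Ioi {f : ℝ → ℝ} {m L y : ℝ}
    (hcont : ContinuousOn f (Ioi m)) (hanti : StrictAntiOn f (Ioi m))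
    (hleft : Tendsto f (𝓝[>] m) atTop) (hright : Tendsto f atTop (𝓝 L)) (hy : L < y) :
    ∃! x, x ∈ Ioi m ∧ f x = y := by
  obtain ⟨x₁, hyx₁, hx₁⟩ :=
    ((hleft.eventually_gt_atTop y).and self_mem_nhdsWithin).exists
  obtain ⟨x₂, hx₂y, hx₁₂⟩ :=
    ((hright.eventually (gt_mem_nhds hy)).and (eventually_gt_atTop x₁)).exists
  have hsub : Icc x₁ x₂ ⊆ Ioi m := fun z hz => lt_of_lt_of_le hx₁ hz.1
  obtain ⟨x, hx, hfx⟩ :=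
    intermediate_value_Icc' hx₁₂.le (hcont.mono hsub) ⟨hx₂y.le, hyx₁.le⟩
  exact ⟨x, ⟨hsub hx, hfx⟩, fun z ⟨hz, hfz⟩ => hanti.injOn hz (hsub hx) (hfz.trans hfx.symm)⟩

theorem one_add_mul_pos_of_neg_inv_lt {a M lam : ℝ} (ha : 0 ≤ a) (haM : a ≤ M)
    (hlam : -M⁻¹ < lam) : 0 < 1 + lam * a := by
  rcases le_or_gt 0 lam with hl | hl
  · positivity
  have hM : 0 < M := inv_pos.mp (by linarith)
  have : -1 < lam * M := by simpa [hM.ne'] using mul_lt_mul_of_pos_right hlam hM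
  linarith [mul_le_mul_of_nonpos_left haM hl.le]

/-- One summand of the multiplier equation, with `a = w'Σ_i w` and `c = (w'(ŷ − μ_i))²`. -/
noncomputable def spreadTerm (a c lam : ℝ) : ℝ :=
  a / (1 + lam * a) + c / (1 + lam * a) ^ 2

noncomputable def spreadSum {ι : Type*} (I : Finset ι) (a c : ι → ℝ) (lam : ℝ) : ℝ :=
  ∑ i ∈ I, spreadTerm (a i) (c i) lam

section spreadTerm

variable {a c : ℝ}

theorem continuousAt_spreadTerm {lam : ℝ} (hlam : 1 + lam * a ≠ 0) :
    ContinuousAt (spreadTerm a c) lam := by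
  unfold spreadTerm
  fun_prop (disch := simp [hlam])

theorem spreadTerm_lt_spreadTerm (ha : 0 < a) (hc : 0 ≤ c) {x y : ℝ}
    (hx : 0 < 1 + x * a) (hxy : x < y) : spreadTerm a c y < spreadTerm a c x := by
  have hden : 1 + x * a < 1 + y * a := by gcongr
  exact add_lt_add_of_lt_of_le (div_lt_div_of_pos_left ha hx hden)
    (div_le_div_of_nonneg_left hc (pow_pos hx 2) (pow_le_pow_left₀ hx.le hden.le 2))

theorem spreadTerm_nonneg (ha : 0 ≤ a) (hc : 0 ≤ c) {lam : ℝ} (hlam : 0 < 1 + lam * a) :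
    0 ≤ spreadTerm a c lam := by
  unfold spreadTerm
  positivity

theorem div_le_spreadTerm (hc : 0 ≤ c) (lam : ℝ) : a / (1 + lam * a) ≤ spreadTerm a c lam :=
  le_add_of_nonneg_right (div_nonneg hc (sq_nonneg _))

theorem tendsto_div_one_add_mul_nhdsGT (ha : 0 < a) :
    Tendsto (fun lam => a / (1 + lam * a)) (𝓝[>] (-a⁻¹)) atTop := by
  have hden : Tendsto (fun lam => 1 + lam * a) (𝓝[>] (-a⁻¹)) (𝓝[>] 0) := by
    refine tendsto_nhdsWithin_iff.mpr ⟨?_, ?_⟩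
    · have hcont : Continuous fun lam => 1 + lam * a := by fun_prop
      exact (hcont.tendsto' _ _ (by simp [ha.ne'])).mono_left nhdsWithin_le_nhds
    · filter_upwards [self_mem_nhdsWithin] with lam hlam
      exact one_add_mul_pos_of_neg_inv_lt ha.le le_rfl hlam
  simp only [div_eq_mul_inv]
  exact hden.inv_tendsto_nhdsGT_zero.const_mul_atTop ha

theorem tendsto_spreadTerm_atTop (ha : 0 < a) : Tendsto (spreadTerm a c) atTop (𝓝 0) := by
  have hden : Tendsto (fun lam => 1 + lam * a) atTop atTop :=
    tendsto_atTop_add_const_left _ _ (tendsto_id.atTop_mul_const ha)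
  have h₁ := (tendsto_inv_atTop_zero.comp hden).const_mul a
  have h₂ := (tendsto_inv_atTop_zero.comp ((tendsto_pow_atTop two_ne_zero).comp hden)).const_mul c
  unfold spreadTerm
  simpa only [div_eq_mul_inv, Function.comp_def, mul_zero, add_zero] using h₁.add h₂

end spreadTerm

section spreadSum

variable {ι : Type*} {I : Finset ι} {a c : ι → ℝ} {M : ℝ}

theorem continuousOn_spreadSum (ha : ∀ i ∈ I, 0 ≤ a i) (haM : ∀ i ∈ I, a i ≤ M) :
    ContinuousOn (spreadSum I a c) (Ioi (-M⁻¹)) :=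
  continuousOn_finsetSum I fun i hi _ hlam => (continuousAt_spreadTerm
    (one_add_mul_pos_of_neg_inv_lt (ha i hi) (haM i hi) hlam).ne').continuousWithinAt

theorem strictAntiOn_spreadSum (hI : I.Nonempty) (ha : ∀ i ∈ I, 0 < a i)
    (hc : ∀ i ∈ I, 0 ≤ c i) (haM : ∀ i ∈ I, a i ≤ M) :
    StrictAntiOn (spreadSum I a c) (Ioi (-M⁻¹)) := fun _ hx _ _ hxy =>
  Finset.sum_lt_sum_of_nonempty hI fun i hi => spreadTerm_lt_spreadTerm (ha i hi) (hc i hi)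
    (one_add_mul_pos_of_neg_inv_lt (ha i hi).le (haM i hi) hx) hxy

theorem tendsto_spreadSum_nhdsGT {i₀ : ι} (hi₀ : i₀ ∈ I) (hM : a i₀ = M)
    (ha : ∀ i ∈ I, 0 < a i) (hc : ∀ i ∈ I, 0 ≤ c i) (haM : ∀ i ∈ I, a i ≤ M) :
    Tendsto (spreadSum I a c) (𝓝[>] (-M⁻¹)) atTop := by
  subst hM
  refine tendsto_atTop_mono' _ ?_ (tendsto_div_one_add_mul_nhdsGT (ha i₀ hi₀))
  filter_upwards [self_mem_nhdsWithin] with lam hlam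
  calc a i₀ / (1 + lam * a i₀) ≤ spreadTerm (a i₀) (c i₀) lam := div_le_spreadTerm (hc i₀ hi₀) lam
    _ ≤ spreadSum I a c lam :=
      Finset.single_le_sum (f := fun i => spreadTerm (a i) (c i) lam) (fun i hi =>
        spreadTerm_nonneg (ha i hi).le (hc i hi)
          (one_add_mul_pos_of_neg_inv_lt (ha i hi).le (haM i hi) hlam)) hi₀

theorem tendsto_spreadSum_atTop (ha : ∀ i ∈ I, 0 < a i) :
    Tendsto (spreadSum I a c) atTop (𝓝 0) := by
  have := tendsto_finsetSum I fun i hi => tendsto_spreadTerm_atTop (c := c i) (ha i hi)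
  rwa [Finset.sum_const_zero] at this

end spreadSum

theorem spread_multiplier_equation_general {d : ℕ} {ι : Type*}
    (I : Finset ι) (hI : I.Nonempty)
    (S : ι → Matrix (Fin d) (Fin d) ℝ) (hS : ∀ i ∈ I, (S i).PosDef)
    (w : Fin d → ℝ) (hw : w ⬝ᵥ w = 1) (yhat : Fin d → ℝ) (μ : ι → Fin d → ℝ)
    (h : ℝ → ℝ)
    (hh : ∀ lam : ℝ, h lam =
      (∑ i ∈ I, (w ⬝ᵥ (S i *ᵥ w)) / (1 + lam * (w ⬝ᵥ (S i *ᵥ w)))) +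
        ∑ i ∈ I, (w ⬝ᵥ (yhat - μ i)) ^ 2 / (1 + lam * (w ⬝ᵥ (S i *ᵥ w))) ^ 2)
    (M : ℝ) (hM : M = I.sup' hI fun i => w ⬝ᵥ (S i *ᵥ w)) :
    ContinuousOn h (Ioi (-M⁻¹)) ∧
    StrictAntiOn h (Ioi (-M⁻¹)) ∧
    Tendsto h (nhdsWithin (-M⁻¹) (Ioi (-M⁻¹))) atTop ∧
    Tendsto h atTop (nhds 0) ∧
    (∀ v : ℝ, 0 < v → ∃! lam : ℝ, lam ∈ Ioi (-M⁻¹) ∧ h lam = (I.card : ℝ) * v) := by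
  set a : ι → ℝ := fun i => w ⬝ᵥ (S i *ᵥ w)
  set c : ι → ℝ := fun i => (w ⬝ᵥ (yhat - μ i)) ^ 2
  have hfun : h = spreadSum I a c := funext fun lam => by
    simp only [hh, spreadSum, spreadTerm, Finset.sum_add_distrib, a, c]
  have hw₀ : w ≠ 0 := by
    rintro rfl
    simp at hw
  have ha : ∀ i ∈ I, 0 < a i := fun i hi => by
    simpa using (hS i hi).dotProduct_mulVec_pos hw₀
  have hc : ∀ i ∈ I, 0 ≤ c i := fun i _ => sq_nonneg _
  have haM : ∀ i ∈ I, a i ≤ M := fun i hi => hM ▸ Finset.le_sup' a hi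
  obtain ⟨i₀, hi₀, hMi₀⟩ := Finset.exists_mem_eq_sup' hI a
  have hcont := continuousOn_spreadSum (c := c) (fun i hi => (ha i hi).le) haM
  have hanti := strictAntiOn_spreadSum hI ha hc haM
  have hleft := tendsto_spreadSum_nhdsGT hi₀ (hM.trans hMi₀).symm ha hc haM
  have hright := tendsto_spreadSum_atTop (c := c) ha
  subst hfun
  exact ⟨hcont, hanti, hleft, hright, fun v hv => existsUnique_eq_of_strictAntiOn_Ioi
    hcont hanti hleft hright (mul_pos (Nat.cast_pos.mpr hI.card_pos) hv)⟩

/-- The function `h(λ) = Σ_{i∈I} (w'Σ_i w)/(1 + λ w'Σ_i w)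
+ Σ_{i∈I} (w'(ŷ − μ_i))²/(1 + λ w'Σ_i w)²` is continuous and strictly decreasing on
`(−1/max_i(w'Σ_i w), ∞)`, tends to `+∞` at the left endpoint and to `0` at `+∞`; hence for
every `v > 0` there is a unique `λ` in this interval with `h(λ) = |I|·v`. -/
theorem spread_multiplier_equation {d : ℕ} {ι : Type*} [DecidableEq ι]
    (I : Finset ι) (hI : I.Nonempty)
    (S : ι → Matrix (Fin d) (Fin d) ℝ) (hS : ∀ i ∈ I, (S i).PosDef)
    (w : Fin d → ℝ) (hw : w ⬝ᵥ w = 1) (yhat : Fin d → ℝ) (μ : ι → Fin d → ℝ)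
    (h : ℝ → ℝ)
    (hh : ∀ lam : ℝ, h lam =
      (∑ i ∈ I, (w ⬝ᵥ (S i *ᵥ w)) / (1 + lam * (w ⬝ᵥ (S i *ᵥ w)))) +
        ∑ i ∈ I, (w ⬝ᵥ (yhat - μ i)) ^ 2 / (1 + lam * (w ⬝ᵥ (S i *ᵥ w))) ^ 2)
    (M : ℝ) (hM : M = I.sup' hI fun i => w ⬝ᵥ (S i *ᵥ w)) :
    ContinuousOn h (Ioi (-M⁻¹)) ∧
    StrictAntiOn h (Ioi (-M⁻¹)) ∧
    Tendsto h (nhdsWithin (-M⁻¹) (Ioi (-M⁻¹))) atTop ∧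
    Tendsto h atTop (nhds 0) ∧
    (∀ v : ℝ, 0 < v → ∃! lam : ℝ, lam ∈ Ioi (-M⁻¹) ∧ h lam = (I.card : ℝ) * v) :=
  spread_multiplier_equation_general I hI S hS w hw yhat μ h hh M hM
end
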